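/- arXiv:1911.06790 — 5 statements merged into one kernel-verified Lean document; each statement's English description precedes it below -/
import Mathlib

section
/- Let G be a superconcentrator with N input nodes I and N output nodes O, meaning that for every pair of subsets S₁ ⊆ I, S₂ ⊆ O with |S₁| = |S₂| = k there exist k vertex-disjoint paths from S₁ to S₂. Then for any set of vertices S and any Y ⊆ O with |S| < |Y|, the number of input nodes that are ancestors of Y in the graph G − S is at least N − |S|. -/
open scoped Classical

/-!
Suppose fewer than `N - |S|` inputs reach `Y` avoiding `S`. Then more than `|S|` inputs do not,
and superconcentration joins `|S| + 1` of them to `|S| + 1` outputs in `Y` by vertex-disjoint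
paths. Disjoint paths cannot all meet `S` when there are more of them than vertices in `S`,
so one of them avoids `S` and its first vertex reaches `Y` after all.
-/

theorem exists_forall_notMem_of_card_lt {ι V : Type*} [Fintype ι] (p : ι → List V)
    (hdisj : ∀ i j, i ≠ j → ∀ v ∈ p i, v ∉ p j) (S : Finset V) (hS : S.card < Fintype.card ι) :
    ∃ i, ∀ v ∈ p i, v ∉ S := by
  by_contra! hmeet
  choose f hfp hfS using hmeet
  obtain ⟨i, j, hij, hfij⟩ := Fintype.exists_ne_map_eq_of_card_lt
    (fun i => (⟨f i, hfS i⟩ : S)) (by simpa using hS)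
  have hf : f i = f j := congrArg Subtype.val hfij
  exact hdisj i j hij (f i) (hfp i) (hf ▸ hfp j)

theorem stmt_0_general {V : Type*} (E : V → V → Prop)
    (I O : Finset V) (N : ℕ) (hI : I.card = N)
    (hsc : ∀ (k : ℕ) (S₁ S₂ : Finset V), S₁ ⊆ I → S₂ ⊆ O →
      S₁.card = k → S₂.card = k →
      ∃ p : Fin k → List V,
        (∀ i, (p i).Chain' E ∧
          (∃ a, (p i).head? = some a ∧ a ∈ S₁) ∧
          (∃ b, (p i).getLast? = some b ∧ b ∈ S₂)) ∧
        (∀ i j, i ≠ j → ∀ v, v ∈ p i → v ∉ p j)) :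
    ∀ (S Y : Finset V), Y ⊆ O → S.card < Y.card →
      N - S.card ≤
        (I.filter (fun u =>
          ∃ y ∈ Y, ∃ p : List V, p.Chain' E ∧ p.head? = some u ∧
            p.getLast? = some y ∧ ∀ v ∈ p, v ∉ S)).card := by
  intro S Y hYO hSY
  set A := I.filter (fun u =>
      ∃ y ∈ Y, ∃ p : List V, p.Chain' E ∧ p.head? = some u ∧
        p.getLast? = some y ∧ ∀ v ∈ p, v ∉ S)
  by_contra! hA
  have hAI : A ⊆ I := Finset.filter_subset _ _
  obtain ⟨S₂, hS₂Y, hS₂⟩ := Finset.exists_subset_card_eq (s := Y) (n := S.card + 1) hSY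
  obtain ⟨S₁, hS₁, hS₁card⟩ := Finset.exists_subset_card_eq (s := I \ A) (n := S.card + 1)
    (by rw [Finset.card_sdiff_of_subset hAI]; omega)
  obtain ⟨p, hp, hdisj⟩ := hsc _ S₁ S₂ (hS₁.trans Finset.sdiff_subset) (hS₂Y.trans hYO)
    hS₁card hS₂
  obtain ⟨i, hi⟩ := exists_forall_notMem_of_card_lt p hdisj S (by simp)
  obtain ⟨hchain, ⟨a, ha, haS₁⟩, ⟨b, hb, hbS₂⟩⟩ := hp i
  have haA : a ∈ A :=
    Finset.mem_filter.mpr ⟨(Finset.mem_sdiff.mp (hS₁ haS₁)).1, b, hS₂Y hbS₂, p i, hchain, ha, hb, hi⟩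
  exact (Finset.mem_sdiff.mp (hS₁ haS₁)).2 haA

/-- Superconcentrator ancestors lemma: if `G` is a superconcentrator with
input set `I` and output set `O` of size `N` (for every `k` and every pair of
`k`-subsets `S₁ ⊆ I`, `S₂ ⊆ O` there are `k` vertex-disjoint directed paths
from `S₁` to `S₂`), then for any vertex set `S` and any `Y ⊆ O` with
`|S| < |Y|`, at least `N − |S|` input nodes are ancestors of `Y` in `G − S`. -/
theorem stmt_0 {V : Type*} [Fintype V] [DecidableEq V] (E : V → V → Prop)
    (I O : Finset V) (N : ℕ) (hI : I.card = N) (hO : O.card = N)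
    (hsc : ∀ (k : ℕ) (S₁ S₂ : Finset V), S₁ ⊆ I → S₂ ⊆ O →
      S₁.card = k → S₂.card = k →
      ∃ p : Fin k → List V,
        (∀ i, (p i).Chain' E ∧
          (∃ a, (p i).head? = some a ∧ a ∈ S₁) ∧
          (∃ b, (p i).getLast? = some b ∧ b ∈ S₂)) ∧
        (∀ i j, i ≠ j → ∀ v, v ∈ p i → v ∉ p j)) :
    ∀ (S Y : Finset V), Y ⊆ O → S.card < Y.card →
      N - S.card ≤
        (I.filter (fun u =>
          ∃ y ∈ Y, ∃ p : List V, p.Chain' E ∧ p.head? = some u ∧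
            p.getLast? = some y ∧ ∀ v ∈ p, v ∉ S)).card :=
  stmt_0_general E I O N hI hsc
end

section
/- Any legal (parallel) black pebbling of an (e, d)-depth robust DAG G that places a pebble on every node of G at some point has cumulative cost at least e·d. -/
/-!
For `r < d` let `S_r` be the set of nodes pebbled in some round `i ≤ t` with `i ≡ r (mod d)`.
Following a path with `d + 1` nodes backwards in time from the round its last node is pebbled,
some node of the path carries a pebble in each of `d` consecutive rounds, one of which is
`≡ r (mod d)`. So `S_r` meets every such path, and depth robustness forces `|S_r| > e`; on the
other hand the `d` sets `S_r` together cost at most the cumulative cost.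
-/

/-- A DAG (edge relation `E`) is `(e,d)`-depth robust if for every vertex set
`S` with `|S| ≤ e` there remains a directed path (a list of vertices
consecutive under `E`) avoiding `S` with more than `d` nodes. -/
def DepthRobust {V : Type*} [Fintype V] [DecidableEq V] (E : V → V → Prop)
    (e d : ℕ) : Prop :=
  ∀ S : Finset V, S.card ≤ e →
    ∃ p : List V, p.Chain' E ∧ (∀ v ∈ p, v ∉ S) ∧ d < p.length

/-- A legal (parallel) black pebbling: starts empty, and a newly placed pebble
requires all parents pebbled in the previous round. -/
def LegalPebbling {V : Type*} [DecidableEq V] (E : V → V → Prop)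
    (P : ℕ → Finset V) : Prop :=
  P 0 = ∅ ∧ ∀ t v, v ∈ P (t + 1) → v ∉ P t → ∀ u, E u v → u ∈ P t

theorem Nat.exists_mod_eq_of_le {r d s : ℕ} (hrd : r < d) (hrs : r ≤ s) :
    ∃ m ≤ s, s < m + d ∧ m % d = r := by
  refine ⟨s - (s - r) % d, Nat.sub_le _ _, ?_, ?_⟩
  · have := Nat.mod_lt (s - r) (by omega : 0 < d)
    omega
  · have hdiv := Nat.div_add_mod (s - r) d
    have hm : s - (s - r) % d = r + d * ((s - r) / d) := by
      have := Nat.mod_le (s - r) d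
      omega
    rw [hm, Nat.add_mul_mod_self_left, Nat.mod_eq_of_lt hrd]

theorem DepthRobust.lt_card {V : Type*} [Fintype V] [DecidableEq V] {E : V → V → Prop}
    {e d : ℕ} (hrob : DepthRobust E e d) {S : Finset V}
    (hS : ∀ p : List V, p.IsChain E → d < p.length → ∃ v ∈ p, v ∈ S) : e < S.card := by
  by_contra! he
  obtain ⟨p, hch, havoid, hlen⟩ := hrob S he
  obtain ⟨v, hvp, hvS⟩ := hS p hch hlen
  exact havoid v hvp hvS

def pebbledAtResidue {V : Type*} [DecidableEq V] (P : ℕ → Finset V) (t d r : ℕ) : Finset V :=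
  {i ∈ Finset.range (t + 1) | i % d = r}.biUnion P

theorem sum_card_pebbledAtResidue_le {V : Type*} [DecidableEq V] (P : ℕ → Finset V) (t d : ℕ) :
    ∑ r ∈ Finset.range d, (pebbledAtResidue P t d r).card ≤
      ∑ i ∈ Finset.range (t + 1), (P i).card :=
  calc ∑ r ∈ Finset.range d, (pebbledAtResidue P t d r).card
      ≤ ∑ r ∈ Finset.range d, ∑ i ∈ Finset.range (t + 1) with i % d = r, (P i).card :=
        Finset.sum_le_sum fun _ _ => Finset.card_biUnion_le
    _ ≤ ∑ i ∈ Finset.range (t + 1), (P i).card :=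
        Finset.sum_fiberwise_le_sum_of_sum_fiber_nonneg fun _ _ => Nat.zero_le _

namespace LegalPebbling

variable {V : Type*} [DecidableEq V] {E : V → V → Prop} {P : ℕ → Finset V}

/-- Going back in time from a pebble on the head `v` of the backwards path `v :: l`: whenever
the current node's pebble was just placed, its predecessor was pebbled a round earlier. -/
theorem exists_mem_of_isChain (hleg : LegalPebbling E P) {s : ℕ} {v : V} {l : List V}
    (hch : (v :: l).IsChain (fun a b => E b a)) (hv : v ∈ P s) {m : ℕ} (hms : m ≤ s)
    (hsm : s ≤ m + l.length) : ∃ u ∈ v :: l, u ∈ P m := by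
  induction s generalizing v l with
  | zero => simp [hleg.1] at hv
  | succ s ih =>
    obtain rfl | hm := eq_or_lt_of_le hms
    · exact ⟨v, List.mem_cons_self, hv⟩
    by_cases hvs : v ∈ P s
    · exact ih hch hvs (by omega) (by omega)
    cases l with
    | nil => simp only [List.length_nil] at hsm; omega
    | cons w l =>
      obtain ⟨hwv, hch'⟩ := List.isChain_cons_cons.mp hch
      obtain ⟨u, hu, huP⟩ :=
        ih hch' (hleg.2 s v hv hvs w hwv) (by omega) (by simp only [List.length_cons] at hsm; omega)
      exact ⟨u, List.mem_cons_of_mem v hu, huP⟩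

theorem length_lt_of_isChain (hleg : LegalPebbling E P) {s : ℕ} {v : V} {l : List V}
    (hch : (v :: l).IsChain (fun a b => E b a)) (hv : v ∈ P s) : l.length < s := by
  by_contra! hs
  obtain ⟨u, -, hu⟩ := hleg.exists_mem_of_isChain hch hv (Nat.zero_le s) (by omega)
  simp [hleg.1] at hu

theorem exists_mem_pebbledAtResidue (hleg : LegalPebbling E P) {t d r : ℕ} (hrd : r < d)
    {p : List V} (hch : p.IsChain E) (hlen : d < p.length)
    (hlast : ∀ v ∈ p, ∃ i ≤ t, v ∈ P i) : ∃ v ∈ p, v ∈ pebbledAtResidue P t d r := by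
  obtain ⟨v, l, hrev⟩ : ∃ v l, p.reverse = v :: l :=
    List.exists_cons_of_ne_nil (by simpa using List.ne_nil_of_length_pos (by omega))
  have hchrev : (v :: l).IsChain (fun a b => E b a) := hrev ▸ List.isChain_reverse.mpr hch
  have hl : l.length + 1 = p.length := by simpa using congrArg List.length hrev.symm
  have hvp : v ∈ p := List.mem_reverse.mp (hrev ▸ List.mem_cons_self)
  obtain ⟨s, hst, hvs⟩ := hlast v hvp
  have hls := hleg.length_lt_of_isChain hchrev hvs
  obtain ⟨m, hms, hsm, hmr⟩ := Nat.exists_mod_eq_of_le (s := s) hrd (by omega)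
  obtain ⟨u, hu, huP⟩ := hleg.exists_mem_of_isChain hchrev hvs hms (by omega)
  refine ⟨u, List.mem_reverse.mp (hrev ▸ hu), Finset.mem_biUnion.mpr ⟨m, ?_, huP⟩⟩
  simp only [Finset.mem_filter, Finset.mem_range]
  omega

end LegalPebbling

/-- Any legal parallel black pebbling of an `(e,d)`-depth robust DAG that
pebbles every node at some point has cumulative cost at least `e·d`. -/
theorem stmt_2 {V : Type*} [Fintype V] [DecidableEq V] (E : V → V → Prop)
    (e d : ℕ) (hrob : DepthRobust E e d) (P : ℕ → Finset V) (t : ℕ)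
    (hleg : LegalPebbling E P) (hcomp : ∀ v : V, ∃ i ≤ t, v ∈ P i) :
    e * d ≤ ∑ i ∈ Finset.range (t + 1), (P i).card := by
  have hresidue : ∀ r < d, e < (pebbledAtResidue P t d r).card := fun r hrd =>
    hrob.lt_card fun _ hch hlen =>
      hleg.exists_mem_pebbledAtResidue hrd hch hlen fun v _ => hcomp v
  calc e * d ≤ ∑ _r ∈ Finset.range d, e := by simp [mul_comm]
    _ ≤ ∑ r ∈ Finset.range d, (pebbledAtResidue P t d r).card :=
        Finset.sum_le_sum fun r hr => (hresidue r (Finset.mem_range.mp hr)).le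
    _ ≤ ∑ i ∈ Finset.range (t + 1), (P i).card := sum_card_pebbledAtResidue_le P t d
end

section
/- Suppose at time t a pebbling configuration P on the graph G₄ of the ciMHF construction has fewer than γN/4 pebbles, where γ is the grates constant. Consider the next s = N/k consecutive nodes of the final layer, whose dynamic parents consist of exactly one uniformly random node from each of the N/k blocks of the output set of G₃. Then with probability at least 1 − (1 − c)^{N/k}, at least one of these parents is a node that is c-good with respect to P and not in P. -/
/-! The choice vectors that miss every good node form the box `∏ j, (Good j)ᶜ`. With
`m = N / k` blocks, the sides of this box have total length at most `(1 - c) · m · k`, so by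
AM-GM its volume is at most `((1 - c) · k) ^ m`, a `(1 - c) ^ m` fraction of all `k ^ m`
choice vectors. -/

open scoped Classical

open Finset

theorem Real.prod_le_pow_card_of_sum_le {ι : Type*} {s : Finset ι} {z : ι → ℝ} {a : ℝ}
    (hz : ∀ i ∈ s, 0 ≤ z i) (hsum : ∑ i ∈ s, z i ≤ #s * a) :
    ∏ i ∈ s, z i ≤ a ^ #s := by
  rcases s.eq_empty_or_nonempty with rfl | hs
  · simp
  have hn : (0 : ℝ) < #s := by exact_mod_cast hs.card_pos
  have hweights : ∑ _i ∈ s, (#s : ℝ)⁻¹ = 1 := by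
    rw [sum_const, nsmul_eq_mul, mul_inv_cancel₀ hn.ne']
  have hmean : ∏ i ∈ s, z i ^ (#s : ℝ)⁻¹ ≤ a := by
    refine (Real.geom_mean_le_arith_mean_weighted s _ z (fun _ _ => by positivity)
      hweights hz).trans ?_
    rw [← mul_sum, inv_mul_le_iff₀ hn]
    exact hsum
  have hroot : ∏ i ∈ s, z i = (∏ i ∈ s, z i ^ (#s : ℝ)⁻¹) ^ #s := by
    rw [← prod_pow]
    refine prod_congr rfl fun i hi => ?_
    rw [← Real.rpow_natCast, ← Real.rpow_mul (hz i hi), inv_mul_cancel₀ hn.ne', Real.rpow_one]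
  rw [hroot]
  exact pow_le_pow_left₀ (prod_nonneg fun i hi => Real.rpow_nonneg (hz i hi) _) hmean _

theorem card_filter_exists_mem_add_prod_card_compl {ι α : Type*} [Fintype ι] [DecidableEq ι]
    [Fintype α] (Good : ι → Finset α) :
    #{f : ι → α | ∃ j, f j ∈ Good j} + ∏ j, #(Good j)ᶜ = Fintype.card α ^ Fintype.card ι := by
  have hmiss : #{f : ι → α | ¬ ∃ j, f j ∈ Good j} = ∏ j, #(Good j)ᶜ := by
    rw [← Fintype.card_piFinset]
    congr 1
    ext f
    simp [Fintype.mem_piFinset]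
  rw [← hmiss, card_filter_add_card_filter_not, card_univ, Fintype.card_fun]

theorem le_card_filter_exists_mem {ι α : Type*} [Fintype ι] [DecidableEq ι] [Fintype α]
    (Good : ι → Finset α) (c : ℝ)
    (hgood : c * (Fintype.card ι * Fintype.card α) ≤ ∑ j, (#(Good j) : ℝ)) :
    (1 - (1 - c) ^ Fintype.card ι) * (Fintype.card α : ℝ) ^ Fintype.card ι ≤
      #{f : ι → α | ∃ j, f j ∈ Good j} := by
  set m := Fintype.card ι
  set k := Fintype.card α
  have hcompl : ∀ j, (#(Good j)ᶜ : ℝ) = k - #(Good j) := fun j => by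
    rw [card_compl, Nat.cast_sub (card_le_univ _)]
  have hmiss : ∏ j, (#(Good j)ᶜ : ℝ) ≤ ((1 - c) * k) ^ m := by
    refine Real.prod_le_pow_card_of_sum_le (fun _ _ => Nat.cast_nonneg _) ?_
    simp only [hcompl, sum_sub_distrib, sum_const, card_univ, nsmul_eq_mul]
    linarith
  have hcount : (#{f : ι → α | ∃ j, f j ∈ Good j} : ℝ) + ∏ j, (#(Good j)ᶜ : ℝ) = k ^ m := by
    exact_mod_cast card_filter_exists_mem_add_prod_card_compl Good
  rw [mul_pow] at hmiss
  linarith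

theorem stmt_7_general
    (N k : ℕ) (hdvd : k ∣ N)
    (c : ℝ)
    (Good : Fin (N / k) → Finset (Fin k))
    (hgood : c * N ≤ ∑ j, ((Good j).card : ℝ)) :
    (1 - (1 - c) ^ (N / k)) * (k : ℝ) ^ (N / k) ≤
      ((Finset.univ.filter
        (fun f : Fin (N / k) → Fin k => ∃ j, f j ∈ Good j)).card : ℝ) := by
  have hN : ((N / k : ℕ) : ℝ) * k = N := by exact_mod_cast Nat.div_mul_cancel hdvd
  have hbound := le_card_filter_exists_mem Good c (by simpa only [Fintype.card_fin, hN] using hgood)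
  rw [Fintype.card_fin, Fintype.card_fin] at hbound
  -- the two sides differ only in the decidability instance of the filter predicate
  convert hbound

/-- Suppose the pebbling configuration `P` has fewer than `γN/4` pebbles, so
that (by the grates property) the blocks of the output set of `G₃` contain in
total at least `cN` nodes that are `c`-good with respect to `P` and not in
`P`; `Good j` denotes these nodes within block `j` (each block has size `k`,
and there are `N/k` blocks). The next `s = N/k` final-layer nodes each draw
one uniformly random parent from their respective block, independently. Then
with probability at least `1 − (1 − c)^{N/k}`, at least one of these parents
lands on a `c`-good node outside `P`: the number of favourable choice vectors
is at least `(1 − (1 − c)^{N/k})·k^{N/k}`. -/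
theorem stmt_7 {V : Type*} [Fintype V] [DecidableEq V]
    (N k : ℕ) (hk : 0 < k) (hdvd : k ∣ N) (hN : 0 < N)
    (c γ : ℝ) (hc : 0 < c) (hc1 : c < 1) (hγ : 0 < γ)
    (P : Finset V) (hP : (P.card : ℝ) < γ * N / 4)
    (Good : Fin (N / k) → Finset (Fin k))
    (hgood : c * N ≤ ∑ j, ((Good j).card : ℝ)) :
    (1 - (1 - c) ^ (N / k)) * (k : ℝ) ^ (N / k) ≤
      ((Finset.univ.filter
        (fun f : Fin (N / k) → Fin k => ∃ j, f j ∈ Good j)).card : ℝ) :=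
  stmt_7_general N k hdvd c Good hgood
end

section
/- Repebbling the ancestors of a missed costly index costs at least (3xy/8)·N^{2−ε}: if the grates graph G₁ is (xN, yN^{1−ε})-depth robust, at least (x − c)N − |P| of its nodes must be repebbled where |P| < xN/8 and c < x/2, and repebbling an (e', d')-depth-robust remainder costs at least e'·d'. -/
/-!
Fix a window length `d` and a residue `φ < d`, and let `B φ` be the set of vertices carrying a
pebble at some round `r ≤ t` with `r ≡ φ (mod d)`. A legal pebbling needs a round per vertex to
walk a pebble along a path, so while it pebbles the last vertex of a path of `d` unpebbled
vertices, every one of the `d` preceding rounds has a pebble on the path; one of those rounds is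
`≡ φ`, hence `B φ` meets every such path. Depth robustness then forces `|B φ| > e`, and since the
sets `B φ` together account for each round's pebbles once, the cumulative cost is at least `e·d`.
For the grates graph, `e = (x − c)N − |P₀| > 3xN/8` and `d = ⌊yN^{1−ε}⌋ + 1 ≥ yN^{1−ε}`.
-/

open Finset

section

variable {V : Type*}

def IsLegalPebbling (E : V → V → Prop) (P : ℕ → Finset V) : Prop :=
  ∀ s v, v ∈ P (s + 1) → v ∉ P s → ∀ u, E u v → u ∈ P s

def IsDepthRobust (E : V → V → Prop) (T : Set V) (e : ℝ) (d : ℕ) : Prop :=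
  ∀ S : Finset V, (S.card : ℝ) ≤ e →
    ∃ p : List V, p.IsChain E ∧ (∀ v ∈ p, v ∈ T ∧ v ∉ S) ∧ d ≤ p.length

def cumulativeCost (P : ℕ → Finset V) (t : ℕ) : ℕ :=
  ∑ s ∈ range (t + 1), (P s).card

def pebbledInResidueClass [DecidableEq V] (P : ℕ → Finset V) (t d φ : ℕ) : Finset V :=
  ((range (t + 1)).filter (· % d = φ)).biUnion P

lemma exists_last_round_not_mem (P : ℕ → Finset V) {v : V} (h0 : v ∉ P 0) {b : ℕ}
    (hb : v ∈ P b) : ∃ a < b, v ∉ P a ∧ ∀ r, a < r → r ≤ b → v ∈ P r := by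
  classical
  set a := Nat.findGreatest (fun a => v ∉ P a) b
  have ha : v ∉ P a := Nat.findGreatest_spec (P := fun a => v ∉ P a) (Nat.zero_le b) h0
  have hab : a < b := (Nat.findGreatest_le b).lt_of_ne fun h => ha ((show a = b from h) ▸ hb)
  exact ⟨a, hab, ha, fun r har hrb => not_not.1 (Nat.findGreatest_is_greatest har hrb)⟩

lemma exists_mod_eq_mem_Ico (a : ℕ) {d φ : ℕ} (hφ : φ < d) :
    ∃ r, a ≤ r ∧ r < a + d ∧ r % d = φ := by
  have hdiv := Nat.div_add_mod a d
  have hmod := Nat.mod_lt a (hφ.trans_le' (Nat.zero_le _))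
  rcases le_or_gt (a % d) φ with h | h
  · refine ⟨d * (a / d) + φ, by omega, by omega, ?_⟩
    rw [Nat.mul_add_mod, Nat.mod_eq_of_lt hφ]
  · refine ⟨d * (a / d) + (d + φ), by omega, by omega, ?_⟩
    rw [Nat.mul_add_mod, Nat.add_mod_left, Nat.mod_eq_of_lt hφ]

lemma sum_card_pebbledInResidueClass_le [DecidableEq V] (P : ℕ → Finset V) (t : ℕ) {d : ℕ}
    (hd : 0 < d) : ∑ φ ∈ range d, (pebbledInResidueClass P t d φ).card ≤ cumulativeCost P t :=
  calc ∑ φ ∈ range d, (pebbledInResidueClass P t d φ).card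
      ≤ ∑ φ ∈ range d, ∑ s ∈ (range (t + 1)).filter (· % d = φ), (P s).card :=
        sum_le_sum fun _ _ => card_biUnion_le
    _ = cumulativeCost P t :=
        sum_fiberwise_of_maps_to (fun s _ => mem_range.2 (Nat.mod_lt s hd)) _

namespace IsLegalPebbling

variable {E : V → V → Prop} {P : ℕ → Finset V}

/-- A pebble reaches the end `v` of a path of unpebbled vertices only after spending a round on
each vertex, so the path carries a pebble at every round of the window of its length before. -/
theorem exists_mem_of_isChain (hP : IsLegalPebbling E P) (p : List V) {v : V} {b : ℕ}
    (hp : (p ++ [v]).IsChain E) (h0 : ∀ w ∈ p ++ [v], w ∉ P 0) (hb : v ∈ P b) :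
    ∀ r ≤ b, b < r + p.length + 1 → ∃ w ∈ p ++ [v], w ∈ P r := by
  induction p using List.reverseRecOn generalizing v b with
  | nil =>
    intro r hrb hbr
    exact ⟨v, by simp, by rwa [show r = b by simp at hbr; omega]⟩
  | append_singleton q u ih =>
    obtain ⟨a, hab, hva, hv⟩ := exists_last_round_not_mem P (h0 v (by simp)) hb
    have hua : u ∈ P a :=
      hP a v (hv (a + 1) (by omega) hab) hva u ((List.isChain_append.1 hp).2.2 u (by simp) v rfl)
    intro r hrb hbr
    by_cases har : a < r
    · exact ⟨v, by simp, hv r har hrb⟩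
    · obtain ⟨w, hw, hwr⟩ := ih hp.left_of_append (fun w hw => h0 w (List.mem_append_left _ hw))
        hua r (by omega) (by simp at hbr ⊢; omega)
      exact ⟨w, List.mem_append_left _ hw, hwr⟩

variable {T : Set V} {e : ℝ} {t d : ℕ}

theorem lt_card_pebbledInResidueClass [DecidableEq V] (hP : IsLegalPebbling E P)
    (hT : IsDepthRobust E T e d) (hT0 : ∀ v ∈ T, v ∉ P 0)
    (hcomp : ∀ v ∈ T, ∃ s ≤ t, v ∈ P s) {φ : ℕ} (hφ : φ < d) :
    e < (pebbledInResidueClass P t d φ).card := by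
  by_contra! hB
  obtain ⟨p, hp, hpT, hlen⟩ := hT _ hB
  obtain ⟨q, v, rfl⟩ : ∃ q v, p = q ++ [v] := by
    rcases List.eq_nil_or_concat p with rfl | ⟨q, v, rfl⟩
    · simp at hlen; omega
    · exact ⟨q, v, List.concat_eq_append⟩
  simp only [List.length_append, List.length_singleton] at hlen
  obtain ⟨s, hst, hs⟩ := hcomp v (hpT v (by simp)).1
  have hcover := hP.exists_mem_of_isChain q hp (fun w hw => hT0 w (hpT w hw).1) hs
  have hlen_s : q.length + 1 ≤ s := by
    by_contra! h
    obtain ⟨w, hw, hw0⟩ := hcover 0 (Nat.zero_le s) (by omega)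
    exact hT0 w (hpT w hw).1 hw0
  obtain ⟨r, har, hra, hrφ⟩ := exists_mod_eq_mem_Ico (s + 1 - d) hφ
  obtain ⟨w, hw, hwr⟩ := hcover r (by omega) (by omega)
  exact (hpT w hw).2 <| mem_biUnion.2 ⟨r, mem_filter.2 ⟨mem_range.2 (by omega), hrφ⟩, hwr⟩

theorem mul_le_cumulativeCost (hP : IsLegalPebbling E P) (hT : IsDepthRobust E T e d)
    (hT0 : ∀ v ∈ T, v ∉ P 0) (hcomp : ∀ v ∈ T, ∃ s ≤ t, v ∈ P s) :
    e * d ≤ cumulativeCost P t := by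
  classical
  rcases Nat.eq_zero_or_pos d with rfl | hd
  · simp
  calc e * d = ∑ _φ ∈ range d, e := by simp [mul_comm]
    _ ≤ ∑ φ ∈ range d, ((pebbledInResidueClass P t d φ).card : ℝ) :=
        sum_le_sum fun φ hφ =>
          (hP.lt_card_pebbledInResidueClass hT hT0 hcomp (mem_range.1 hφ)).le
    _ ≤ cumulativeCost P t := by exact_mod_cast sum_card_pebbledInResidueClass_le P t hd

end IsLegalPebbling

end

theorem stmt_10_general {V : Type*} (E : V → V → Prop)
    (N x y c ε : ℝ) (hN : 0 < N) (hy : 0 < y)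
    (hcx : c < x / 2)
    (P₀ : Finset V) (hP₀ : (P₀.card : ℝ) < x * N / 8)
    (T : Finset V)
    (hrob : ∀ S : Finset V, (S.card : ℝ) ≤ (x - c) * N - P₀.card →
      ∃ p : List V, p.Chain' E ∧
        (∀ v ∈ p, v ∈ T ∧ v ∉ S ∧ v ∉ P₀) ∧
        y * N ^ (1 - ε) < (p.length : ℝ))
    (P : ℕ → Finset V) (t : ℕ) (hstart : P 0 = P₀)
    (hleg : ∀ s v, v ∈ P (s + 1) → v ∉ P s → ∀ u, E u v → u ∈ P s)
    (hcomp : ∀ v ∈ T, ∃ s ≤ t, v ∈ P s) :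
    (3 * x * y / 8) * N ^ (2 - ε)
      ≤ ∑ s ∈ Finset.range (t + 1), ((P s).card : ℝ) := by
  set d := y * N ^ (1 - ε)
  have hd : 0 ≤ d := by positivity
  have hrobust : IsDepthRobust E (↑T \ ↑P₀) ((x - c) * N - P₀.card) (⌊d⌋₊ + 1) := by
    intro S hS
    obtain ⟨p, hp, hpT, hlen⟩ := hrob S hS
    exact ⟨p, hp, fun v hv => ⟨⟨(hpT v hv).1, (hpT v hv).2.2⟩, (hpT v hv).2.1⟩,
      (Nat.floor_lt hd).2 hlen⟩
  have hcost := IsLegalPebbling.mul_le_cumulativeCost hleg hrobust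
    (fun v hv => hstart ▸ hv.2) (fun v hv => hcomp v hv.1)
  have hcN : c * N < x / 2 * N := mul_lt_mul_of_pos_right hcx hN
  have he : 3 * x * N / 8 ≤ (x - c) * N - P₀.card := by linarith
  calc (3 * x * y / 8) * N ^ (2 - ε) = (3 * x * N / 8) * d := by
        rw [show 2 - ε = 1 + (1 - ε) by ring, Real.rpow_add hN, Real.rpow_one]; ring
    _ ≤ ((x - c) * N - P₀.card) * (⌊d⌋₊ + 1 : ℕ) :=
        mul_le_mul he (by push_cast; exact (Nat.lt_floor_add_one d).le) hd (by linarith)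
    _ ≤ _ := by simpa [cumulativeCost] using hcost

/-- Repebbling the ancestors of a missed costly index is expensive: suppose the
set `T` of nodes of the grates graph `G₁` that must be repebbled satisfies the
depth-robustness property inherited from the `(xN, yN^{1−ε})`-depth robustness
of `G₁`, namely: after removing any set `S` of at most `(x − c)·N − |P₀|`
vertices (together with the initial pebbles `P₀`), `T` still contains a
directed path of more than `y·N^{1−ε}` nodes. If `|P₀| < xN/8` and `c < x/2`,
then any legal pebbling starting from `P₀` that pebbles all of `T` has
cumulative cost at least `(3xy/8)·N^{2−ε}` (using that completely pebbling an
`(e′,d′)`-depth robust graph costs at least `e′·d′`). -/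
theorem stmt_10 {V : Type*} [Fintype V] [DecidableEq V] (E : V → V → Prop)
    (N x y c ε : ℝ) (hN : 0 < N) (hx : 0 < x) (hy : 0 < y)
    (hc : 0 < c) (hcx : c < x / 2) (hε : 0 < ε) (hε1 : ε < 1)
    (P₀ : Finset V) (hP₀ : (P₀.card : ℝ) < x * N / 8)
    (T : Finset V)
    (hrob : ∀ S : Finset V, (S.card : ℝ) ≤ (x - c) * N - P₀.card →
      ∃ p : List V, p.Chain' E ∧
        (∀ v ∈ p, v ∈ T ∧ v ∉ S ∧ v ∉ P₀) ∧
        y * N ^ (1 - ε) < (p.length : ℝ))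
    (P : ℕ → Finset V) (t : ℕ) (hstart : P 0 = P₀)
    (hleg : ∀ s v, v ∈ P (s + 1) → v ∉ P s → ∀ u, E u v → u ∈ P s)
    (hcomp : ∀ v ∈ T, ∃ s ≤ t, v ∈ P s) :
    (3 * x * y / 8) * N ^ (2 - ε)
      ≤ ∑ s ∈ Finset.range (t + 1), ((P s).card : ℝ) :=
  stmt_10_general E N x y c ε hN hy hcx P₀ hP₀ T hrob P t hstart hleg hcomp
end

section
/- Hybrid reduction for adaptive security: if an evaluation algorithm MHF.Eval has (t, ε)-single security, then it has (t − O(r · time(MHF.Eval)), r, r·ε)-adaptive security. Concretely, any adversary making r adaptive rounds and winning the adaptive data-independency game with advantage greater than r·ε, running in time t − O(r · time(MHF.Eval)), yields a single-round adversary running in time t with advantage greater than ε. -/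
/-- Success probability of a single-round adversary `(x₀, x₁, guess)` in the
data-independency game: the challenger picks a uniform bit `b` and uniform
coins, computes the leakage patterns `lp₀, lp₁` of `Eval x₀`, `Eval x₁`, sends
`(lp_b, lp_{1−b})`, and the adversary wins if `guess` returns `b`. -/
noncomputable def singleSucc {Input Coins LP : Type*} [Fintype Coins]
    (Eval : Input → Coins → LP) (x0 x1 : Input)
    (guess : LP → LP → Bool) : ℝ :=
  (∑ b : Bool, ∑ c0 : Coins, ∑ c1 : Coins,
      if guess (if b then Eval x1 c1 else Eval x0 c0)
          (if b then Eval x0 c0 else Eval x1 c1) = b then (1 : ℝ) else 0) /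
    (2 * (Fintype.card Coins) ^ 2)

/-- One adaptive run: in each round the (deterministic) adaptive adversary
`q` chooses a pair of inputs from the history of leakage-pattern pairs, and
the challenger answers with `(lp_b, lp_{1−b})` using fresh coins. -/
def runAdaptive {Input Coins LP : Type*} (Eval : Input → Coins → LP)
    (q : List (LP × LP) → Input × Input) (b : Bool)
    (cs : List (Coins × Coins)) : List (LP × LP) :=
  cs.foldl (fun h c =>
    h ++ [if b then (Eval (q h).2 c.2, Eval (q h).1 c.1)
          else (Eval (q h).1 c.1, Eval (q h).2 c.2)]) []

/-- Success probability of an `r`-round adaptive adversary `(q, guess)`: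
probability over the uniform hidden bit `b` and the `r` rounds of uniform
fresh coins that the adversary guesses `b` from the transcript. -/
noncomputable def adaptSucc {Input Coins LP : Type*} [Fintype Coins]
    (Eval : Input → Coins → LP) (r : ℕ)
    (q : List (LP × LP) → Input × Input)
    (guess : List (LP × LP) → Bool) : ℝ :=
  (∑ b : Bool, ∑ cs : Fin r → Coins × Coins,
      if guess (runAdaptive Eval q b (List.ofFn cs)) = b
      then (1 : ℝ) else 0) /
    (2 * ((Fintype.card Coins) ^ 2) ^ r)

/-!
Write `acceptProb b n h` for the probability that the distinguisher accepts after `n` further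
rounds, all answered with bit `b`, starting from the history `h`. Both games are won with
probability `1/2 + (acceptProb true - acceptProb false) / 2`. Flipping the bit of the first round
from `true` to `false` while all later rounds use `false` costs at most `2ε`: once the later coins
are fixed, the rest of the run is a deterministic function of the first answer, so this is a
single-round game. Induction on the number of rounds (the hybrid argument) gives a total gap of
at most `2rε`.
-/

open Finset
open scoped BigOperators

section Guessing

variable {Ω : Type*} [Fintype Ω] [Nonempty Ω]

lemma guessing_success_sub_half (g : Bool → Ω → Bool) :
    (∑ b : Bool, ∑ ω, if g b ω = b then (1 : ℝ) else 0) / (2 * Fintype.card Ω) - 1 / 2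
      = ((𝔼 ω, if g true ω then (1 : ℝ) else 0) - 𝔼 ω, if g false ω then (1 : ℝ) else 0) / 2 := by
  have hcard : (0 : ℝ) < Fintype.card Ω := by exact_mod_cast Fintype.card_pos
  have hfalse : (∑ ω, if g false ω = false then (1 : ℝ) else 0)
      = Fintype.card Ω - ∑ ω, if g false ω then (1 : ℝ) else 0 := by
    have hflip (ω : Ω) : (if g false ω = false then (1 : ℝ) else 0)
        = 1 - if g false ω then (1 : ℝ) else 0 := by
      cases g false ω <;> simp
    simp only [hflip, sum_sub_distrib, sum_const, card_univ, nsmul_eq_mul, mul_one]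
  rw [Fintype.sum_bool, hfalse, Fintype.expect_eq_sum_div_card, Fintype.expect_eq_sum_div_card]
  field_simp
  ring

end Guessing

section SingleGame

variable {Input Coins LP : Type*} (Eval : Input → Coins → LP)

def answer (x : Input × Input) (b : Bool) (c : Coins × Coins) : LP × LP :=
  if b then (Eval x.2 c.2, Eval x.1 c.1) else (Eval x.1 c.1, Eval x.2 c.2)

variable [Fintype Coins]

def IsSingleSecure (ε : ℝ) : Prop :=
  ∀ (x0 x1 : Input) (g : LP → LP → Bool), |singleSucc Eval x0 x1 g - 1 / 2| ≤ ε

variable [Nonempty Coins]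

lemma singleSucc_sub_half (x0 x1 : Input) (g : LP → LP → Bool) :
    singleSucc Eval x0 x1 g - 1 / 2
      = ((𝔼 c, if Function.uncurry g (answer Eval (x0, x1) true c) then (1 : ℝ) else 0)
          - 𝔼 c, if Function.uncurry g (answer Eval (x0, x1) false c) then (1 : ℝ) else 0) / 2 := by
  have := guessing_success_sub_half fun b c => Function.uncurry g (answer Eval (x0, x1) b c)
  rw [Fintype.card_prod, ← sq] at this
  rw [← this, singleSucc]
  simp only [Fintype.sum_prod_type, Fintype.sum_bool, answer, Nat.cast_pow]
  rfl

variable {Eval} {ε : ℝ}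

lemma abs_expect_answer_sub_le (hsingle : IsSingleSecure Eval ε)
    (x : Input × Input) (g : LP × LP → Bool) :
    |(𝔼 c, if g (answer Eval x true c) then (1 : ℝ) else 0)
        - 𝔼 c, if g (answer Eval x false c) then (1 : ℝ) else 0| ≤ 2 * ε := by
  have h := hsingle x.1 x.2 (Function.curry g)
  rw [singleSucc_sub_half, Function.uncurry_curry, abs_div, abs_two] at h
  linarith

end SingleGame

section Transcript

variable {Input Coins LP : Type*} (Eval : Input → Coins → LP)
  (q : List (LP × LP) → Input × Input) (guess : List (LP × LP) → Bool)

def extend (b : Bool) (h : List (LP × LP)) (c : Coins × Coins) : List (LP × LP) :=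
  h ++ [answer Eval (q h) b c]

variable [Fintype Coins]

noncomputable def acceptProb (b : Bool) (n : ℕ) (h : List (LP × LP)) : ℝ :=
  𝔼 cs : Fin n → Coins × Coins,
    if guess ((List.ofFn cs).foldl (extend Eval q b) h) then (1 : ℝ) else 0

lemma acceptProb_zero (b : Bool) (h : List (LP × LP)) :
    acceptProb Eval q guess b 0 h = if guess h then 1 else 0 := by
  simp [acceptProb]

lemma acceptProb_succ (b : Bool) (n : ℕ) (h : List (LP × LP)) :
    acceptProb Eval q guess b (n + 1) h
      = 𝔼 c, acceptProb Eval q guess b n (extend Eval q b h c) := by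
  rw [acceptProb, ← Fintype.expect_equiv (Fin.consEquiv fun _ => Coins × Coins) _ _ fun _ => rfl,
    ← univ_product_univ, expect_product]
  simp only [acceptProb, Fin.consEquiv, Equiv.coe_fn_mk, List.ofFn_cons, List.foldl_cons]

lemma adaptSucc_sub_half [Nonempty Coins] (r : ℕ) :
    adaptSucc Eval r q guess - 1 / 2
      = (acceptProb Eval q guess true r [] - acceptProb Eval q guess false r []) / 2 := by
  have := guessing_success_sub_half fun b (cs : Fin r → Coins × Coins) =>
    guess (runAdaptive Eval q b (List.ofFn cs))
  rw [Fintype.card_fun, Fintype.card_prod, Fintype.card_fin, ← sq] at this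
  rw [adaptSucc, ← Nat.cast_pow, ← Nat.cast_pow, this]
  -- `runAdaptive` is definitionally the fold of `extend` from the empty history
  rfl

end Transcript

section HybridArgument

variable {Input Coins LP : Type*} [Fintype Coins] [Nonempty Coins] {Eval : Input → Coins → LP}
  {q : List (LP × LP) → Input × Input} {guess : List (LP × LP) → Bool} {ε : ℝ}

lemma abs_expect_acceptProb_extend_sub_le
    (hsingle : IsSingleSecure Eval ε)
    (n : ℕ) (h : List (LP × LP)) :
    |(𝔼 c, acceptProb Eval q guess false n (extend Eval q true h c))
        - 𝔼 c, acceptProb Eval q guess false n (extend Eval q false h c)| ≤ 2 * ε := by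
  simp only [acceptProb, ← expect_sub_distrib]
  rw [expect_comm]
  refine (abs_expect_le _ _).trans (expect_le univ_nonempty fun cs _ => ?_)
  rw [expect_sub_distrib]
  exact abs_expect_answer_sub_le hsingle (q h)
    fun a => guess ((List.ofFn cs).foldl (extend Eval q false) (h ++ [a]))

theorem abs_acceptProb_sub_le
    (hsingle : IsSingleSecure Eval ε)
    (n : ℕ) (h : List (LP × LP)) :
    |acceptProb Eval q guess true n h - acceptProb Eval q guess false n h| ≤ 2 * n * ε := by
  induction n generalizing h with
  | zero => simp [acceptProb_zero]
  | succ n ih =>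
    rw [acceptProb_succ, acceptProb_succ]
    calc _ = |(𝔼 c, (acceptProb Eval q guess true n (extend Eval q true h c)
                - acceptProb Eval q guess false n (extend Eval q true h c)))
            + ((𝔼 c, acceptProb Eval q guess false n (extend Eval q true h c))
                - 𝔼 c, acceptProb Eval q guess false n (extend Eval q false h c))| := by
          rw [expect_sub_distrib, sub_add_sub_cancel]
      _ ≤ 2 * n * ε + 2 * ε := by
          refine (abs_add_le _ _).trans (add_le_add ?_
            (abs_expect_acceptProb_extend_sub_le hsingle n h))
          exact (abs_expect_le _ _).trans (expect_le univ_nonempty fun c _ => ih _)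
      _ = 2 * ↑(n + 1) * ε := by push_cast; ring

end HybridArgument

theorem stmt_14_general {Input Coins LP : Type*} [Fintype Coins] [Nonempty Coins]
    (Eval : Input → Coins → LP) (ε : ℝ)
    (hsingle : ∀ (x0 x1 : Input) (guess : LP → LP → Bool),
      |singleSucc Eval x0 x1 guess - 1 / 2| ≤ ε)
    (r : ℕ) (q : List (LP × LP) → Input × Input)
    (guess : List (LP × LP) → Bool) :
    |adaptSucc Eval r q guess - 1 / 2| ≤ r * ε := by
  have hgap := abs_acceptProb_sub_le (q := q) (guess := guess) hsingle r []
  rw [adaptSucc_sub_half, abs_div, abs_two]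
  linarith

/-- Hybrid reduction, single security implies adaptive security: if every
single-round adversary against `MHF.Eval` has advantage at most `ε`, then
every `r`-round adaptive adversary has advantage at most `r·ε` (equivalently,
an adaptive adversary with advantage exceeding `r·ε` yields a single-round
adversary with advantage exceeding `ε`, at the cost of simulating the `r`
evaluations of `MHF.Eval`). -/
theorem stmt_14 {Input Coins LP : Type*} [Fintype Coins] [Nonempty Coins]
    (Eval : Input → Coins → LP) (ε : ℝ) (hε : 0 ≤ ε)
    (hsingle : ∀ (x0 x1 : Input) (guess : LP → LP → Bool),
      |singleSucc Eval x0 x1 guess - 1 / 2| ≤ ε)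
    (r : ℕ) (q : List (LP × LP) → Input × Input)
    (guess : List (LP × LP) → Bool) :
    |adaptSucc Eval r q guess - 1 / 2| ≤ r * ε :=
  stmt_14_general Eval ε hsingle r q guess
end
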